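/- Let μ be the measure on ℝ given by density x ↦ (1/(2π))·√(4 − x²) on the interval [−2, 2] (and 0 elsewhere) with respect to Lebesgue measure (the semicircle law). Then μ is a probability measure, and for every k ∈ ℕ its even moments are the Catalan numbers, ∫ x^{2k} dμ(x) = catalan k, while all its odd moments vanish, ∫ x^{2k+1} dμ(x) = 0. -/
import Mathlib

open MeasureTheory

/-- The semicircle law: density (1/(2π))·√(4 − x²) on [−2,2], 0 elsewhere. -/
noncomputable def semicircleLaw : Measure ℝ :=
  volume.withDensity fun x =>
    ENNReal.ofReal
      (if x ∈ Set.Icc (-2 : ℝ) 2 then (1 / (2 * Real.pi)) * Real.sqrt (4 - x ^ 2) else 0)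

open Real intervalIntegral Set in
private lemma sc_sub (n : ℕ) :
    ∫ x in (-2:ℝ)..2, x ^ n * Real.sqrt (4 - x ^ 2)
      = 2 ^ (n + 2) * ∫ θ in (-(π/2))..(π/2), Real.sin θ ^ n * Real.cos θ ^ 2 := by
  have h := integral_comp_mul_deriv (a := -(π/2)) (b := π/2)
      (f := fun θ => 2 * Real.sin θ) (f' := fun θ => 2 * Real.cos θ)
      (g := fun x => x ^ n * Real.sqrt (4 - x ^ 2))
      (fun x _ => by simpa using (Real.hasDerivAt_sin x).const_mul 2)
      (by fun_prop) (by fun_prop)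
  simp only [Real.sin_neg, Real.sin_pi_div_two, mul_one, mul_neg] at h
  norm_num at h
  rw [← h, ← intervalIntegral.integral_const_mul]
  refine intervalIntegral.integral_congr fun θ hθ => ?_
  rw [Set.uIcc_of_le (neg_le_self (by positivity : (0:ℝ) ≤ π/2))] at hθ
  have hc : 0 ≤ Real.cos θ :=
    Real.cos_nonneg_of_mem_Icc ⟨hθ.1, hθ.2⟩
  have h4 : (4:ℝ) - (2 * Real.sin θ) ^ 2 = (2 * Real.cos θ) ^ 2 := by
    have := Real.sin_sq_add_cos_sq θ; nlinarith
  rw [h4, Real.sqrt_sq (by positivity)]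
  ring

open Real in
private lemma S_rec (n : ℕ) :
    (∫ θ in (-(π/2))..(π/2), Real.sin θ ^ (n + 2))
      = (n + 1) / (n + 2) * ∫ θ in (-(π/2))..(π/2), Real.sin θ ^ n := by
  rw [integral_sin_pow n]
  simp [Real.cos_pi_div_two]

open Real in
private lemma S_even (k : ℕ) :
    (∫ θ in (-(π/2))..(π/2), Real.sin θ ^ (2 * k))
      = π * (Nat.centralBinom k) / 4 ^ k := by
  induction k with
  | zero => simp [Nat.centralBinom]
  | succ k ih =>
    have h := S_rec (2 * k)
    have h2 : 2 * (k + 1) = 2 * k + 2 := by ring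
    rw [h2, h, ih]
    have hcb : ((k:ℝ) + 1) * Nat.centralBinom (k + 1)
        = 2 * (2 * k + 1) * Nat.centralBinom k := by
      exact_mod_cast congrArg (Nat.cast (R := ℝ)) (Nat.succ_mul_centralBinom_succ k)
    have hk1 : ((k:ℝ) + 1) ≠ 0 := by positivity
    have hc2 : ((Nat.centralBinom (k + 1) : ℝ))
        = 2 * (2 * k + 1) * Nat.centralBinom k / ((k:ℝ) + 1) := by
      rw [eq_div_iff hk1]; linarith [hcb]
    rw [hc2]
    push_cast
    have h4k : ((4:ℝ) ^ k) ≠ 0 := by positivity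
    have h2k : (2 * (k:ℝ) + 2) ≠ 0 := by positivity
    rw [pow_succ]
    field_simp
    ring

open Real in
private lemma T_even (k : ℕ) :
    ∫ x in (-2:ℝ)..2, x ^ (2 * k) * Real.sqrt (4 - x ^ 2)
      = 2 * π * catalan k := by
  rw [sc_sub]
  have hsplit : (∫ θ in (-(π/2))..(π/2), Real.sin θ ^ (2 * k) * Real.cos θ ^ 2)
      = (∫ θ in (-(π/2))..(π/2), Real.sin θ ^ (2 * k))
        - ∫ θ in (-(π/2))..(π/2), Real.sin θ ^ (2 * k + 2) := by
    rw [← intervalIntegral.integral_sub (by apply Continuous.intervalIntegrable; fun_prop)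
      (by apply Continuous.intervalIntegrable; fun_prop)]
    refine intervalIntegral.integral_congr fun θ _ => ?_
    rw [Real.cos_sq']
    ring
  rw [hsplit, S_rec, S_even]
  have hcat : ((k:ℝ) + 1) * (catalan k : ℝ) = Nat.centralBinom k := by
    exact_mod_cast congrArg (Nat.cast (R := ℝ)) (succ_mul_catalan_eq_centralBinom k)
  have h4 : (0:ℝ) < 4 ^ k := pow_pos (by norm_num) k
  have hk2 : ((2 * k : ℕ) : ℝ) = 2 * k := by push_cast; ring
  rw [hk2]
  have hpow : (2:ℝ) ^ (2 * k + 2) = 4 * 4 ^ k := by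
    rw [pow_add, pow_mul]; ring
  rw [hpow, ← hcat]
  have hk1 : ((k:ℝ) + 1) ≠ 0 := by positivity
  have h4k : ((4:ℝ) ^ k) ≠ 0 := ne_of_gt h4
  have h2k : (2 * (k:ℝ) + 2) ≠ 0 := by positivity
  field_simp
  ring

private lemma T_odd (k : ℕ) :
    ∫ x in (-2:ℝ)..2, x ^ (2 * k + 1) * Real.sqrt (4 - x ^ 2) = 0 := by
  set F : ℝ → ℝ := fun x => x ^ (2 * k + 1) * Real.sqrt (4 - x ^ 2) with hF
  have h1 : (∫ x in (-2:ℝ)..2, F (-x)) = ∫ x in (-2:ℝ)..2, F x := by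
    simpa using intervalIntegral.integral_comp_neg (a := (-2:ℝ)) (b := 2) (f := F)
  have h2 : ∀ x, F (-x) = -F x := by
    intro x
    simp only [hF]
    rw [Odd.neg_pow ⟨k, by ring⟩, neg_pow, neg_mul]
    norm_num
  rw [funext h2] at h1
  rw [intervalIntegral.integral_neg] at h1
  linarith

open Real Set in
private lemma sc_integral (g : ℝ → ℝ) (hg : Continuous g) :
    ∫ x, g x ∂semicircleLaw
      = (1 / (2 * π)) * ∫ x in (-2:ℝ)..2, g x * Real.sqrt (4 - x ^ 2) := by
  set f : ℝ → ℝ := fun x =>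
    if x ∈ Set.Icc (-2 : ℝ) 2 then (1 / (2 * π)) * Real.sqrt (4 - x ^ 2) else 0 with hf
  have hfm : Measurable f := by
    apply Measurable.ite measurableSet_Icc <;> fun_prop
  have hμ : semicircleLaw = volume.withDensity fun x => ((f x).toNNReal : ENNReal) := rfl
  have hfnn : ∀ x, 0 ≤ f x := by
    intro x
    simp only [hf]
    split
    · positivity
    · exact le_rfl
  rw [hμ, integral_withDensity_eq_integral_smul (by fun_prop) g]
  have heq : (fun x => (f x).toNNReal • g x)
      = Set.indicator (Set.Icc (-2:ℝ) 2)
          (fun x => (1 / (2 * π)) * (g x * Real.sqrt (4 - x ^ 2))) := by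
    funext x
    rw [NNReal.smul_def, Real.coe_toNNReal _ (hfnn x), smul_eq_mul]
    simp only [hf, Set.indicator_apply]
    split
    · ring
    · simp
  rw [heq, MeasureTheory.integral_indicator measurableSet_Icc,
    MeasureTheory.integral_Icc_eq_integral_Ioc,
    ← intervalIntegral.integral_of_le (by norm_num : (-2:ℝ) ≤ 2),
    intervalIntegral.integral_const_mul]

/-- The semicircle law is a probability measure, its even moments are the Catalan
numbers, and its odd moments vanish. -/
theorem semicircle_moments :
    IsProbabilityMeasure semicircleLaw ∧
    (∀ k : ℕ, ∫ x, x ^ (2 * k) ∂semicircleLaw = catalan k) ∧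
    (∀ k : ℕ, ∫ x, x ^ (2 * k + 1) ∂semicircleLaw = 0) := by
  have hπ : (2 * Real.pi) ≠ 0 := by positivity
  have heven : ∀ k : ℕ, ∫ x, x ^ (2 * k) ∂semicircleLaw = catalan k := by
    intro k
    rw [sc_integral _ (by fun_prop), T_even]
    field_simp
  have hodd : ∀ k : ℕ, ∫ x, x ^ (2 * k + 1) ∂semicircleLaw = 0 := by
    intro k
    rw [sc_integral _ (by fun_prop), T_odd]
    simp
  refine ⟨?_, heven, hodd⟩
  constructor
  set f : ℝ → ℝ := fun x =>
    if x ∈ Set.Icc (-2 : ℝ) 2 then (1 / (2 * Real.pi)) * Real.sqrt (4 - x ^ 2) else 0 with hf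
  have hfnn : ∀ x, 0 ≤ f x := by
    intro x
    simp only [hf]
    split
    · positivity
    · exact le_rfl
  have hfi : Integrable f := by
    have : f = Set.indicator (Set.Icc (-2:ℝ) 2)
        (fun x => (1 / (2 * Real.pi)) * Real.sqrt (4 - x ^ 2)) := by
      funext x; simp [hf, Set.indicator_apply]
    rw [this]
    rw [integrable_indicator_iff measurableSet_Icc]
    exact (Continuous.continuousOn (by fun_prop)).integrableOn_Icc
  have h0 : ∫ x, f x = 1 := by
    have hind : f = Set.indicator (Set.Icc (-2:ℝ) 2)
        (fun x => (1 / (2 * Real.pi)) * Real.sqrt (4 - x ^ 2)) := by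
      funext x; simp [hf, Set.indicator_apply]
    rw [hind, MeasureTheory.integral_indicator measurableSet_Icc,
      MeasureTheory.integral_Icc_eq_integral_Ioc,
      ← intervalIntegral.integral_of_le (by norm_num : (-2:ℝ) ≤ 2),
      intervalIntegral.integral_const_mul]
    have hT := T_even 0
    simp only [mul_zero, pow_zero, one_mul, Nat.cast_ofNat, catalan_zero, Nat.cast_one] at hT
    rw [hT]
    field_simp
  have happ : semicircleLaw Set.univ = ∫⁻ x, ENNReal.ofReal (f x) ∂volume := by
    rw [semicircleLaw, MeasureTheory.withDensity_apply _ MeasurableSet.univ,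
      Measure.restrict_univ]
  rw [happ, ← MeasureTheory.ofReal_integral_eq_lintegral_ofReal hfi
    (Filter.Eventually.of_forall hfnn), h0]
  simp
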